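/- arXiv:math/9904082 — 2 statements merged into one kernel-verified Lean document; each statement's English description precedes it below -/
import Mathlib

section
/- Let N ≥ 2, L ≥ 2, ε ∈ {1,−1}, t a primitive 2(N+L)-th root of unity, ζ ∈ ℂ^×, and w = w_{N,t,ε,ζ} the SU(N)_L-SOS Boltzmann weight. For edges p, q ∈ 𝒢¹ define the operator T_{p,q} on the vector space ℂ𝒢¹ (with basis the edges of 𝒢 = 𝒢_{N,L}) by T_{p,q}(s) = Σ_{r∈𝒢¹} w[p s/r q] r, where w[p s/r q] is the Boltzmann weight of the face with left edge p, top edge s, bottom edge r, right edge q. Then the only subspaces of ℂ𝒢¹ invariant under all the operators T_{p,q} (p, q ∈ 𝒢¹) are 0 and ℂ𝒢¹ (i.e. ℂ𝒢¹ is an irreducible right A(w_{N,t,ε,ζ})-module). -/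
noncomputable section
open scoped Classical BigOperators

/-- We encode a weight `λ = λ_1 1̂ + ⋯ + λ_N N̂` (with `λ_N = 0`) by the function
`ℕ → ℤ`, `k ↦ λ_k`, vanishing outside `{1, …, N}`. -/
abbrev SOSVtx : Type := ℕ → ℤ

namespace SOS

/-- Membership in the vertex set `V_{N,L}` :
`L ≥ λ_1 ≥ λ_2 ≥ ⋯ ≥ λ_N = 0`, normalized to vanish outside `{1, …, N}`. -/
def InV (N L : ℕ) (x : SOSVtx) : Prop :=
  (∀ k, k = 0 ∨ N < k → x k = 0) ∧ x N = 0 ∧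
    (∀ k, 1 ≤ k → k < N → x (k + 1) ≤ x k) ∧ x 1 ≤ (L : ℤ)

/-- Adding `î` to a weight (in normalized coordinates, with `λ_N = 0`). -/
def addHat (N i : ℕ) (x : SOSVtx) : SOSVtx := fun k =>
  if 1 ≤ k ∧ k ≤ N then x k + (if k = i then 1 else 0) - (if i = N then 1 else 0) else 0

/-- `d(λ|i,j) = λ_i − λ_j + j − i`. -/
def dZ (x : SOSVtx) (i j : ℕ) : ℤ := x i - x j + (j : ℤ) - (i : ℤ)

/-- The zero weight (the vertex `0 ∈ V_{N,L}`). -/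
def zeroV : SOSVtx := fun _ => 0

/-- The quantum integer `[n] = (tⁿ − t⁻ⁿ)/(t − t⁻¹)`. -/
def qint (t : ℂ) (n : ℤ) : ℂ := (t ^ n - t ^ (-n)) / (t - t⁻¹)

/-- The quantum factorial `[n]! = [n][n−1]⋯[1]`. -/
def qfact (t : ℂ) : ℕ → ℂ
  | 0 => 1
  | n + 1 => qint t (n + 1) * qfact t n

/-- `y = λ + î` is obtained from `x = λ` by adding the `i`-th hat vector, and both are
vertices (an edge of the graph `𝒢_{N,L}`, labelled by `i ∈ {1, …, N}`). -/
def IsEdgeI (N L : ℕ) (x y : SOSVtx) (i : ℕ) : Prop :=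
  InV N L x ∧ InV N L y ∧ 1 ≤ i ∧ i ≤ N ∧ y = addHat N i x

/-- There is an edge `x → y` in `𝒢_{N,L}`. -/
def IsEdgeV (N L : ℕ) (x y : SOSVtx) : Prop := ∃ i, IsEdgeI N L x y i

/-- `(A, B; C, D)` (top-left, top-right, bottom-left, bottom-right) are the corners of a
face of `𝒢_{N,L}`. -/
def IsFace (N L : ℕ) (A B C D : SOSVtx) : Prop :=
  IsEdgeV N L A B ∧ IsEdgeV N L A C ∧ IsEdgeV N L B D ∧ IsEdgeV N L C D

/-- The hat index of an edge `A → B` (well defined since `𝒢_{N,L}` has no multiple edges). -/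
def hatIdx (N L : ℕ) (A B : SOSVtx) : ℕ :=
  if h : IsEdgeV N L A B then h.choose else 0

/-- The Boltzmann weight `w_{N,t,ε,ζ}` of the `SU(N)_L`-SOS model, as a function of the
four corner vertices (top-left, top-right, bottom-left, bottom-right) of a face;
it vanishes on non-faces. -/
def wFace (N L : ℕ) (t ζ ε : ℂ) (A B C D : SOSVtx) : ℂ :=
  if IsFace N L A B C D then
    if B = C then
      (if hatIdx N L A B = hatIdx N L B D then ζ⁻¹ * t
       else -ζ⁻¹ * t ^ (-(dZ A (hatIdx N L A B) (hatIdx N L B D))) /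
          qint t (dZ A (hatIdx N L A B) (hatIdx N L B D)))
    else ζ⁻¹ * ε * qint t (dZ A (hatIdx N L A B) (hatIdx N L B D) - 1) /
        qint t (dZ A (hatIdx N L A B) (hatIdx N L B D))
  else 0

/-- `pathOK N L x l` : the list of hat indices `l` is a path of `𝒢_{N,L}` starting at `x`. -/
def pathOK (N L : ℕ) : SOSVtx → List ℕ → Prop
  | x, [] => InV N L x
  | x, i :: is => InV N L x ∧ 1 ≤ i ∧ i ≤ N ∧ pathOK N L (addHat N i x) is

/-- The end vertex of the path starting at `x` with hat indices `l`. -/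
def pEnd (N : ℕ) : SOSVtx → List ℕ → SOSVtx
  | x, [] => x
  | x, i :: is => pEnd N (addHat N i x) is

/-- The inversion statistic `𝓛(λ|i_1,…,i_m) = #{(k,l) : k < l, i_k < i_l}`. -/
def Lstat : List ℕ → ℕ
  | [] => 0
  | i :: is => (is.filter fun j => i < j).length + Lstat is

/-- The fundamental weight `Λ_m = 1̂ + ⋯ + m̂` in normalized coordinates. -/
def LamV (N m : ℕ) : SOSVtx := fun k =>
  if 1 ≤ k ∧ k ≤ N ∧ k ≤ m then (if m = N then 0 else 1) else 0

/-- The vertex set `V_{N,L}` as a finite set of normalized coordinate functions. -/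
def VF (N L : ℕ) : Finset SOSVtx :=
  (Finset.univ.image fun f : Fin N → Fin (L + 1) =>
    (fun k => if h : 1 ≤ k ∧ k ≤ N then ((f ⟨k - 1, by omega⟩ : ℕ) : ℤ) else 0 : SOSVtx)).filter
    (InV N L)

end SOS

namespace SOS

/-- The edges of `𝒢_{N,L}`, as pairs (source, target) of vertices (the graph has no
multiple edges). -/
def EdgeT (N L : ℕ) : Type := {e : SOSVtx × SOSVtx // IsEdgeV N L e.1 e.2}

/-- The value of the operator `T_{p,q}` on the basis vector `s` of `ℂ𝒢¹`:
`T_{p,q}(s) = Σ_{r ∈ 𝒢¹} w[p s/r q] r`; since the bottom edge `r` of a face with left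
edge `p`, top edge `s` and right edge `q` is uniquely determined, the sum reduces to
(at most) the single term shown here. -/
def Tval (N L : ℕ) (t ζ ε : ℂ) (p q s : EdgeT N L) : EdgeT N L →₀ ℂ :=
  if h : IsEdgeV N L p.1.2 q.1.2 ∧ s.1.1 = p.1.1 ∧ s.1.2 = q.1.1 then
    wFace N L t ζ ε s.1.1 s.1.2 p.1.2 q.1.2 •
      Finsupp.single (⟨(p.1.2, q.1.2), h.1⟩ : EdgeT N L) (1 : ℂ)
  else 0

/-- The operator `T_{p,q}` on `ℂ𝒢¹`. -/
def Tmap (N L : ℕ) (t ζ ε : ℂ) (p q : EdgeT N L) :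
    (EdgeT N L →₀ ℂ) →ₗ[ℂ] (EdgeT N L →₀ ℂ) :=
  Finsupp.lsum ℂ fun s => LinearMap.toSpanSingleton ℂ _ (Tval N L t ζ ε p q s)

end SOS

namespace SOS

section Aux

variable {N L : ℕ}

lemma inv_anti {x : SOSVtx} (hx : InV N L x) :
    ∀ {i j : ℕ}, 1 ≤ i → i ≤ j → j ≤ N → x j ≤ x i := by
  intro i j h1 hij hjN
  induction j with
  | zero => omega
  | succ j ih =>
    rcases Nat.lt_or_ge i (j+1) with h | h
    · have hj1 : 1 ≤ j := by omega
      have := hx.2.2.1 j hj1 (by omega)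
      have := ih (by omega) (by omega)
      omega
    · have : i = j + 1 := by omega
      simp [this]

lemma inv_nonneg {x : SOSVtx} (hx : InV N L x) {k : ℕ} (h1 : 1 ≤ k) (h2 : k ≤ N) :
    0 ≤ x k := by
  have := inv_anti hx h1 h2 (le_refl N)
  have := hx.2.1
  omega

lemma inv_le_L {x : SOSVtx} (hx : InV N L x) {k : ℕ} (h1 : 1 ≤ k) (h2 : k ≤ N) :
    x k ≤ (L : ℤ) := by
  have := inv_anti hx (le_refl 1) h1 h2
  have := hx.2.2.2
  omega

lemma zeroV_InV : InV N L zeroV :=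
  ⟨fun _ _ => rfl, rfl, fun _ _ _ => le_refl 0, by simp [zeroV]⟩

/-- A convenient constructor for membership of `addHat N i x` in `V`. -/
lemma addHat_InV (hN : 2 ≤ N) {x : SOSVtx} (hx : InV N L x) {i : ℕ}
    (h1 : 1 ≤ i) (h2 : i ≤ N)
    (c1 : i = 1 → x 1 < (L : ℤ))
    (c2 : 2 ≤ i → i < N → x i < x (i - 1))
    (c3 : i = N → 1 ≤ x (N - 1)) :
    InV N L (addHat N i x) := by
  obtain ⟨hz, hN0, hmono, hL1⟩ := hx
  refine ⟨?_, ?_, ?_, ?_⟩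
  · intro k hk; simp only [addHat]; rw [if_neg]; omega
  · simp only [addHat]
    split_ifs <;> omega
  · intro k hk1 hkN
    have hd : x (k+1) ≤ x k := hmono k hk1 hkN
    simp only [addHat]
    rcases Nat.lt_trichotomy (k+1) i with h | h | h
    · split_ifs <;> omega
    · -- k+1 = i
      subst h
      rcases Nat.lt_or_ge (k+1) N with hiN | hiN
      · have hc := c2 (by omega) hiN
        simp only [Nat.add_sub_cancel] at hc
        split_ifs <;> omega
      · have hiN' : k + 1 = N := by omega
        have hc := c3 hiN'
        have hk' : N - 1 = k := by omega
        rw [hk'] at hc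
        rw [← hiN'] at hN0
        split_ifs <;> omega
    · split_ifs <;> omega
  · simp only [addHat]
    rcases Nat.eq_or_lt_of_le h1 with h | h
    · have hc := c1 h.symm
      split_ifs <;> omega
    · split_ifs <;> omega

/-- Every vertex has an outgoing edge. -/
lemma exists_out (hN : 2 ≤ N) (hL : 1 ≤ L) {x : SOSVtx} (hx : InV N L x) :
    ∃ i, IsEdgeI N L x (addHat N i x) i := by
  rcases lt_or_ge (x 1) (L : ℤ) with h | h
  · exact ⟨1, hx, addHat_InV hN hx le_rfl (by omega) (fun _ => h)
      (by omega) (by omega), le_rfl, by omega, rfl⟩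
  · -- x 1 = L ≥ 2 > 0 = x N, so there is a descent
    have hx1 : x 1 = (L : ℤ) := le_antisymm hx.2.2.2 h
    have hdesc : ∃ k, 1 ≤ k ∧ k < N ∧ x (k+1) < x k := by
      by_contra hc
      push_neg at hc
      have hasc : ∀ k, 1 ≤ k → k ≤ N → x 1 ≤ x k := by
        intro k
        induction k with
        | zero => omega
        | succ k ih =>
          intro _ hkN
          rcases Nat.lt_or_ge 1 (k+1) with h' | h'
          · have := hc k (by omega) (by omega)
            have := ih (by omega) (by omega)
            omega
          · have : k + 1 = 1 := by omega
            rw [this]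
      have h1 := hasc N (by omega) le_rfl
      have h2 := hx.2.1
      have h3 : (1:ℤ) ≤ (L:ℤ) := by exact_mod_cast hL
      omega
    obtain ⟨k, hk1, hkN, hkd⟩ := hdesc
    refine ⟨k+1, hx, addHat_InV hN hx (by omega) (by omega) (by omega)
      (fun _ _ => by simpa using hkd) (fun hkk => ?_), by omega, by omega, rfl⟩
    · have hk' : k = N - 1 := by omega
      subst hk'
      have h0 : x N = 0 := hx.2.1
      have hh : N - 1 + 1 = N := by omega
      rw [hh] at hkd
      omega

/-- The hat index of an edge is unique. -/
lemma edgeIdx_unique {x y : SOSVtx} {i j : ℕ}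
    (hi : IsEdgeI N L x y i) (hj : IsEdgeI N L x y j) : i = j := by
  obtain ⟨_, _, hi1, hiN, hiy⟩ := hi
  obtain ⟨_, _, hj1, hjN, hjy⟩ := hj
  by_contra hij
  have e1 := congrFun (hiy.symm.trans hjy) i
  have e2 := congrFun (hiy.symm.trans hjy) j
  simp only [addHat, if_pos (show 1 ≤ i ∧ i ≤ N by omega),
    if_pos (show 1 ≤ j ∧ j ≤ N by omega), if_true, eq_self_iff_true] at e1 e2
  split_ifs at e1 e2 <;> omega

lemma hatIdx_eq {x y : SOSVtx} {i : ℕ} (hi : IsEdgeI N L x y i) :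
    hatIdx N L x y = i := by
  have h : IsEdgeV N L x y := ⟨i, hi⟩
  rw [hatIdx, dif_pos h]
  exact edgeIdx_unique h.choose_spec hi

end Aux

end SOS
namespace SOS

section Aux2

variable {N L : ℕ}

lemma qint_ne_zero {t : ℂ} (ht : IsPrimitiveRoot t (2 * (N + L)))
    (hNL : 2 ≤ N + L) (d : ℤ) (hd0 : d ≠ 0) (hd : d.natAbs < N + L) :
    qint t d ≠ 0 := by
  have hne : (2 * (N + L)) ≠ 0 := by omega
  have t0 : t ≠ 0 := ht.ne_zero hne
  have hden : t - t⁻¹ ≠ 0 := by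
    intro h
    have h1 : t = t⁻¹ := sub_eq_zero.mp h
    have h3 : t ^ (2:ℕ) = 1 := by
      rw [pow_two]; nth_rewrite 2 [h1]; exact mul_inv_cancel₀ t0
    have hdv := (ht.pow_eq_one_iff_dvd 2).mp h3
    have := Nat.le_of_dvd (by norm_num) hdv
    omega
  have hnum : t ^ d - t ^ (-d) ≠ 0 := by
    intro h
    have h2 : t ^ d = t ^ (-d) := sub_eq_zero.mp h
    have h3 : t ^ (2 * d) = 1 := by
      have he : t ^ (2*d) = t ^ d * t ^ d := by
        rw [← zpow_add₀ t0]; ring_nf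
      rw [he]
      nth_rewrite 2 [h2]
      rw [← zpow_add₀ t0]
      simp
    have h4 := (ht.zpow_eq_one_iff_dvd (2*d)).mp h3
    have h4' : (2:ℤ) * ((N+L : ℕ) : ℤ) ∣ 2 * d := by
      have : ((2 * (N + L) : ℕ) : ℤ) = 2 * ((N+L : ℕ) : ℤ) := by push_cast; ring
      rwa [this] at h4
    have h5 : ((N + L : ℕ) : ℤ) ∣ d := (mul_dvd_mul_iff_left (two_ne_zero)).mp h4'
    have h6 : (N + L) ∣ d.natAbs := by
      have h7 := Int.natAbs_dvd_natAbs.mpr h5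
      simpa only [Int.natAbs_natCast] using h7
    have := Nat.le_of_dvd (by omega) h6
    omega
  rw [qint]
  exact div_ne_zero hnum hden

lemma dZ_bounds {x : SOSVtx} (hx : InV N L x) {i j : ℕ}
    (hi1 : 1 ≤ i) (hiN : i ≤ N) (hj1 : 1 ≤ j) (hjN : j ≤ N) (hij : i ≠ j) :
    dZ x i j ≠ 0 ∧ (dZ x i j).natAbs < N + L := by
  have h0i := inv_nonneg hx hi1 hiN
  have h0j := inv_nonneg hx hj1 hjN
  have hLi := inv_le_L hx hi1 hiN
  have hLj := inv_le_L hx hj1 hjN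
  rw [dZ]
  rcases Nat.lt_or_ge i j with h | h
  · have := inv_anti hx hi1 (le_of_lt h) hjN
    constructor
    · omega
    · omega
  · have hji : j < i := by omega
    have := inv_anti hx hj1 (le_of_lt hji) hiN
    constructor
    · omega
    · omega

lemma wFace_ne_zero {t ζ ε : ℂ} (ht : IsPrimitiveRoot t (2 * (N + L)))
    (hζ : ζ ≠ 0) (hN : 2 ≤ N) (hL : 2 ≤ L) {A B D : SOSVtx} {i j : ℕ}
    (hAB : IsEdgeI N L A B i) (hBD : IsEdgeI N L B D j) :
    wFace N L t ζ ε A B B D ≠ 0 := by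
  have hne : (2 * (N + L)) ≠ 0 := by omega
  have t0 : t ≠ 0 := ht.ne_zero hne
  have hF : IsFace N L A B B D := ⟨⟨i, hAB⟩, ⟨i, hAB⟩, ⟨j, hBD⟩, ⟨j, hBD⟩⟩
  rw [wFace, if_pos hF, if_pos rfl, hatIdx_eq hAB, hatIdx_eq hBD]
  by_cases hij : i = j
  · rw [if_pos hij]
    exact mul_ne_zero (inv_ne_zero hζ) t0
  · rw [if_neg hij]
    obtain ⟨hd0, hdlt⟩ := dZ_bounds hAB.1 hAB.2.2.1 hAB.2.2.2.1 hBD.2.2.1 hBD.2.2.2.1 hij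
    apply div_ne_zero
    · exact mul_ne_zero (neg_ne_zero.mpr (inv_ne_zero hζ)) (zpow_ne_zero _ t0)
    · exact qint_ne_zero ht (by omega) _ hd0 hdlt

end Aux2

end SOS
namespace SOS

section Aux3

variable {N L : ℕ} {t ζ ε : ℂ}

/-- The key computation: applying `T_{p,q}` with `p = e` (an edge `A → B` in the
support of `x`) and `q` an edge `B → D` produces a nonzero multiple of the basis
vector `(B, D)`. -/
lemma single_step_mem (ht : IsPrimitiveRoot t (2 * (N + L))) (hζ : ζ ≠ 0)
    (hN : 2 ≤ N) (hL : 2 ≤ L)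
    {W : Submodule ℂ (EdgeT N L →₀ ℂ)}
    (hW : ∀ p q : EdgeT N L, ∀ x ∈ W, Tmap N L t ζ ε p q x ∈ W)
    {x : EdgeT N L →₀ ℂ} (hxW : x ∈ W) (e : EdgeT N L) (he : x e ≠ 0)
    {D : SOSVtx} (hBD : IsEdgeV N L e.1.2 D) :
    Finsupp.single (⟨(e.1.2, D), hBD⟩ : EdgeT N L) (1 : ℂ) ∈ W := by
  classical
  set q : EdgeT N L := ⟨(e.1.2, D), hBD⟩ with hq
  set w : ℂ := wFace N L t ζ ε e.1.1 e.1.2 e.1.2 D with hwdef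
  obtain ⟨i, hi⟩ := e.2
  obtain ⟨j, hj⟩ := id hBD
  have hw : w ≠ 0 := wFace_ne_zero ht hζ hN hL hi hj
  -- Tval e q s vanishes unless s = e
  have hTval : ∀ s : EdgeT N L, s ≠ e → Tval N L t ζ ε e q s = 0 := by
    intro s hs
    rw [Tval]; refine dif_neg ?_
    rintro ⟨-, h1, h2⟩
    exact hs (Subtype.ext (Prod.ext h1 h2))
  have hTvale : Tval N L t ζ ε e q e = w • Finsupp.single q (1:ℂ) := by
    rw [Tval]; exact dif_pos (show IsEdgeV N L e.1.2 q.1.2 ∧ e.1.1 = e.1.1 ∧ e.1.2 = q.1.1 from ⟨hBD, rfl, rfl⟩)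
  have hcomp : Tmap N L t ζ ε e q x = (x e * w) • Finsupp.single q (1:ℂ) := by
    rw [Tmap, Finsupp.lsum_apply]
    rw [Finsupp.sum]
    by_cases hmem : e ∈ x.support
    · rw [Finset.sum_eq_single_of_mem e hmem (fun b _ hb => by
        rw [LinearMap.toSpanSingleton_apply, hTval b hb, smul_zero])]
      rw [LinearMap.toSpanSingleton_apply, hTvale, smul_smul]
    · exact absurd (Finsupp.notMem_support_iff.mp hmem) he
  have hmem : (x e * w) • Finsupp.single q (1:ℂ) ∈ W := by
    rw [← hcomp]; exact hW e q x hxW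
  have := W.smul_mem (x e * w)⁻¹ hmem
  rwa [smul_smul, inv_mul_cancel₀ (mul_ne_zero he hw), one_smul] at this

end Aux3

end SOS
namespace SOS

/-- Reachability in the graph `𝒢_{N,L}`. -/
def ReachV (N L : ℕ) : SOSVtx → SOSVtx → Prop := Relation.ReflTransGen (IsEdgeV N L)

/-- Subtracting a full row of boxes of length `m`. -/
def rowSub (N m : ℕ) (x : SOSVtx) : SOSVtx := fun k =>
  if 1 ≤ k ∧ k ≤ N ∧ k ≤ m then x k - 1 else 0

section Aux4

variable {N L : ℕ}

lemma row_reach (hN : 2 ≤ N) {x : SOSVtx} (hx : InV N L x) {m : ℕ}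
    (hm1 : 1 ≤ m) (hm2 : m < N) (hxm : 1 ≤ x m)
    (htop : ∀ k, m < k → x k = 0) :
    InV N L (rowSub N m x) ∧ ReachV N L x (rowSub N m x) ∧
      ReachV N L (rowSub N m x) x ∧
      (Finset.Icc 1 N).sum (rowSub N m x) = (Finset.Icc 1 N).sum x - m := by
  have hL1 := hx.2.2.2
  have hN0 := hx.2.1
  -- the intermediate vertices of the first chain
  set v : ℕ → SOSVtx := fun r k =>
    if 1 ≤ k ∧ k ≤ N then (if k ≤ m then x k else if k ≤ r then 1 else 0) else 0 with hv
  have hv_InV : ∀ r, r ≤ N - 1 → InV N L (v r) := by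
    intro r hr
    refine ⟨?_, ?_, ?_, ?_⟩
    · intro k hk; simp only [hv]; rw [if_neg]; omega
    · simp only [hv]; split_ifs <;> omega
    · intro k hk1 hkN
      have hd := hx.2.2.1 k hk1 hkN
      simp only [hv]
      rcases le_or_gt k m with h | h
      · have hmk : x m ≤ x k := inv_anti hx hk1 h (by omega)
        split_ifs <;> omega
      · split_ifs <;> omega
    · simp only [hv]; split_ifs <;> omega
  have hvm : v m = x := by
    funext k
    by_cases h1 : 1 ≤ k ∧ k ≤ N
    · simp only [hv, if_pos h1]
      rcases le_or_gt k m with h | h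
      · rw [if_pos h]
      · rw [if_neg (by omega), if_neg (by omega), htop k h]
    · simp only [hv, if_neg h1]
      exact (hx.1 k (by omega)).symm
  have hstep : ∀ r, m ≤ r → r + 1 ≤ N - 1 → addHat N (r+1) (v r) = v (r+1) := by
    intro r hmr hrN
    funext k
    simp only [addHat, hv]
    split_ifs <;> omega
  have hx'_InV : InV N L (rowSub N m x) := by
    refine ⟨?_, ?_, ?_, ?_⟩
    · intro k hk; simp only [rowSub]; rw [if_neg]; omega
    · simp only [rowSub]; split_ifs <;> omega
    · intro k hk1 hkN
      have hd := hx.2.2.1 k hk1 hkN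
      simp only [rowSub]
      rcases le_or_gt k m with h | h
      · have hmk : x m ≤ x k := inv_anti hx hk1 h (by omega)
        split_ifs <;> omega
      · split_ifs <;> omega
    · simp only [rowSub]; split_ifs <;> omega
  have hlast : addHat N N (v (N-1)) = rowSub N m x := by
    funext k
    simp only [addHat, hv, rowSub]
    split_ifs <;> omega
  have hreach1 : ∀ r, m ≤ r → r ≤ N - 1 → ReachV N L x (v r) := by
    intro r hr
    induction r, hr using Nat.le_induction with
    | base => intro _; rw [hvm]; exact Relation.ReflTransGen.refl
    | succ r hmr ih =>
      intro hrN
      exact (ih (by omega)).tail ⟨r+1, hv_InV r (by omega), hv_InV (r+1) hrN,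
        by omega, by omega, (hstep r hmr hrN).symm⟩
  have hr1 : ReachV N L x (rowSub N m x) :=
    (hreach1 (N-1) (by omega) le_rfl).tail
      ⟨N, hv_InV (N-1) le_rfl, hx'_InV, by omega, le_rfl, hlast.symm⟩
  -- the second chain
  set u : ℕ → SOSVtx := fun r k =>
    if 1 ≤ k ∧ k ≤ N then (if k ≤ r then x k else if k ≤ m then x k - 1 else 0) else 0 with hu
  have hu0 : u 0 = rowSub N m x := by
    funext k
    simp only [hu, rowSub]
    split_ifs <;> omega
  have hum : u m = x := by
    funext k
    by_cases h1 : 1 ≤ k ∧ k ≤ N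
    · simp only [hu, if_pos h1]
      rcases le_or_gt k m with h | h
      · rw [if_pos h]
      · rw [if_neg (by omega), if_neg (by omega), htop k h]
    · simp only [hu, if_neg h1]
      exact (hx.1 k (by omega)).symm
  have hu_InV : ∀ r, r ≤ m → InV N L (u r) := by
    intro r hr
    refine ⟨?_, ?_, ?_, ?_⟩
    · intro k hk; simp only [hu]; rw [if_neg]; omega
    · simp only [hu]; split_ifs <;> omega
    · intro k hk1 hkN
      have hd := hx.2.2.1 k hk1 hkN
      simp only [hu]
      rcases le_or_gt k m with h | h
      · have hmk : x m ≤ x k := inv_anti hx hk1 h (by omega)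
        split_ifs <;> omega
      · split_ifs <;> omega
    · simp only [hu]; split_ifs <;> omega
  have hustep : ∀ r, r + 1 ≤ m → addHat N (r+1) (u r) = u (r+1) := by
    intro r hrm
    funext k
    simp only [addHat, hu]
    split_ifs <;> omega
  have hreach2 : ∀ r, r ≤ m → ReachV N L (rowSub N m x) (u r) := by
    intro r
    induction r with
    | zero => intro _; rw [hu0]; exact Relation.ReflTransGen.refl
    | succ r ih =>
      intro h
      exact (ih (by omega)).tail ⟨r+1, hu_InV r (by omega), hu_InV (r+1) h,
        by omega, by omega, (hustep r h).symm⟩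
  have hr2 : ReachV N L (rowSub N m x) x := by
    have := hreach2 m le_rfl
    rwa [hum] at this
  -- the sum identity
  have hfil : (Finset.Icc 1 N).filter (fun k => k ≤ m) = Finset.Icc 1 m := by
    ext a; simp only [Finset.mem_Icc, Finset.mem_filter]; omega
  have hsum : (Finset.Icc 1 N).sum (rowSub N m x) = (Finset.Icc 1 N).sum x - m := by
    have e1 : (Finset.Icc 1 N).sum (rowSub N m x)
        = ∑ k ∈ Finset.Icc 1 N, (if k ≤ m then x k - 1 else 0) := by
      refine Finset.sum_congr rfl fun k hk => ?_
      rw [Finset.mem_Icc] at hk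
      simp only [rowSub]
      split_ifs <;> omega
    have e2 : ∑ k ∈ Finset.Icc 1 N, (if k ≤ m then x k - 1 else 0)
        = ∑ k ∈ Finset.Icc 1 m, (x k - 1) := by
      rw [← Finset.sum_filter, hfil]
    have e3 : (Finset.Icc 1 N).sum x = ∑ k ∈ Finset.Icc 1 m, x k := by
      refine (Finset.sum_subset (Finset.Icc_subset_Icc_right (by omega)) ?_).symm
      intro k hk hk'
      rw [Finset.mem_Icc] at hk hk'
      exact htop k (by omega)
    rw [e1, e2, e3, Finset.sum_sub_distrib, Finset.sum_const, Nat.card_Icc]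
    simp
  exact ⟨hx'_InV, hr1, hr2, hsum⟩

lemma reach_both (hN : 2 ≤ N) :
    ∀ n (x : SOSVtx), InV N L x → ((Finset.Icc 1 N).sum x).toNat = n →
      ReachV N L x zeroV ∧ ReachV N L zeroV x := by
  intro n
  induction n using Nat.strong_induction_on with
  | _ n ih =>
  intro x hx hS
  by_cases h0 : ∀ k, 1 ≤ k → k ≤ N → x k = 0
  · have hxz : x = zeroV := by
      funext k
      by_cases h1 : 1 ≤ k ∧ k ≤ N
      · exact h0 k h1.1 h1.2
      · exact hx.1 k (by omega)
    subst hxz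
    exact ⟨Relation.ReflTransGen.refl, Relation.ReflTransGen.refl⟩
  · push_neg at h0
    obtain ⟨k0, hk01, hk0N, hk0⟩ := h0
    have hk0pos : 1 ≤ x k0 := by
      have := inv_nonneg hx hk01 hk0N; omega
    set m := Nat.findGreatest (fun j => 1 ≤ x j) N with hm
    have hxm : 1 ≤ x m := by
      rw [hm]; exact Nat.findGreatest_spec (P := fun j => 1 ≤ x j) hk0N hk0pos
    have hm1 : 1 ≤ m := by
      rw [hm]
      exact le_trans hk01 (Nat.le_findGreatest (P := fun j => 1 ≤ x j) hk0N hk0pos)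
    have hmN : m < N := by
      rcases Nat.lt_or_ge m N with h | h
      · exact h
      · have hmN' : m = N := le_antisymm (Nat.findGreatest_le N) h
        rw [hmN'] at hxm
        have := hx.2.1
        omega
    have htop : ∀ k, m < k → x k = 0 := by
      intro k hk
      rcases Nat.lt_or_ge N k with h | h
      · exact hx.1 k (Or.inr h)
      · have h1 := Nat.findGreatest_is_greatest hk h
        have h2 := inv_nonneg hx (by omega) h
        have h1 : ¬ 1 ≤ x k := h1
        omega
    obtain ⟨hx', hr1, hr2, hsum⟩ := row_reach hN hx hm1 hmN hxm htop
    have hpos : 0 ≤ (Finset.Icc 1 N).sum (rowSub N m x) :=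
      Finset.sum_nonneg fun k hk => by
        rw [Finset.mem_Icc] at hk
        exact inv_nonneg hx' hk.1 hk.2
    have hlt : ((Finset.Icc 1 N).sum (rowSub N m x)).toNat < n := by omega
    obtain ⟨hz1, hz2⟩ := ih _ hlt (rowSub N m x) hx' rfl
    exact ⟨hr1.trans hz1, hz2.trans hr2⟩

end Aux4

end SOS
open SOS in
/-- `ℂ𝒢¹` is an irreducible right `A(w_{N,t,ε,ζ})`-module: the only
subspaces of `ℂ𝒢¹` invariant under all the operators `T_{p,q}` (`p, q ∈ 𝒢¹`) are `0`
and `ℂ𝒢¹`. -/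
theorem SOS_CG1_irreducible (N L : ℕ) (hN : 2 ≤ N) (hL : 2 ≤ L)
    (t : ℂ) (ht : IsPrimitiveRoot t (2 * (N + L)))
    (ε : ℂ) (hε : ε = 1 ∨ ε = -1) (ζ : ℂ) (hζ : ζ ≠ 0)
    (W : Submodule ℂ (EdgeT N L →₀ ℂ))
    (hW : ∀ p q : EdgeT N L, ∀ x ∈ W, Tmap N L t ζ ε p q x ∈ W) :
    W = ⊥ ∨ W = ⊤ := by
  by_cases hbot : W = ⊥
  · exact Or.inl hbot
  right
  obtain ⟨x, hxW, hx0⟩ := (Submodule.ne_bot_iff W).mp hbot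
  obtain ⟨e, he⟩ := Finsupp.ne_iff.mp hx0
  rw [Finsupp.coe_zero, Pi.zero_apply] at he
  -- `e` is an edge `A → B`; pick an outgoing edge `B → D` of `B`
  obtain ⟨i0, hi0⟩ := e.2
  have hB : InV N L e.1.2 := hi0.2.1
  obtain ⟨j0, hj0⟩ := exists_out hN (by omega) hB
  have h1 : Finsupp.single (⟨(e.1.2, addHat N j0 e.1.2), ⟨j0, hj0⟩⟩ : EdgeT N L) (1:ℂ) ∈ W :=
    single_step_mem ht hζ hN hL hW hxW e he ⟨j0, hj0⟩
  -- propagate membership along paths of `𝒢`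
  have hprop : ∀ {X Y : SOSVtx}, Relation.ReflTransGen (IsEdgeV N L) X Y →
      (∃ A, ∃ hA : IsEdgeV N L A X,
        Finsupp.single (⟨(A, X), hA⟩ : EdgeT N L) (1:ℂ) ∈ W) →
      ∀ Z, ∀ hYZ : IsEdgeV N L Y Z,
        Finsupp.single (⟨(Y, Z), hYZ⟩ : EdgeT N L) (1:ℂ) ∈ W := by
    intro X Y hXY
    induction hXY using Relation.ReflTransGen.head_induction_on with
    | refl =>
      rintro ⟨A, hA, h⟩ Z hYZ
      exact single_step_mem ht hζ hN hL hW h (⟨(A, Y), hA⟩ : EdgeT N L)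
        (ne_of_eq_of_ne Finsupp.single_eq_same one_ne_zero) hYZ
    | head hab hbc ih =>
      rintro ⟨A, hA, h⟩ Z hYZ
      refine ih ⟨_, hab, ?_⟩ Z hYZ
      exact single_step_mem ht hζ hN hL hW h (⟨(A, _), hA⟩ : EdgeT N L)
        (ne_of_eq_of_ne Finsupp.single_eq_same one_ne_zero) hab
  -- every basis vector is in W
  have hall : ∀ f : EdgeT N L, Finsupp.single f (1:ℂ) ∈ W := by
    intro f
    obtain ⟨jf, hjf⟩ := f.2
    have hC : InV N L f.1.1 := hjf.1
    have hD : InV N L (addHat N j0 e.1.2) := hj0.2.1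
    have hreach : Relation.ReflTransGen (IsEdgeV N L) (addHat N j0 e.1.2) f.1.1 :=
      (reach_both hN _ (addHat N j0 e.1.2) hD rfl).1.trans
        (reach_both hN _ f.1.1 hC rfl).2
    have h2 := hprop hreach ⟨e.1.2, ⟨j0, hj0⟩, h1⟩ f.1.2 f.2
    have hfe : (⟨(f.1.1, f.1.2), f.2⟩ : EdgeT N L) = f := Subtype.ext rfl
    rwa [hfe] at h2
  -- conclude
  rw [eq_top_iff]
  rintro y -
  rw [← Finsupp.sum_single y]
  refine Submodule.finsuppSum_mem ℂ W y _ fun a _ => ?_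
  have hs : Finsupp.single a (y a) = y a • Finsupp.single a (1:ℂ) := by
    rw [Finsupp.smul_single', mul_one]
  rw [hs]
  exact W.smul_mem _ (hall a)
end
end

section
/- Let N ≥ 2 and L ≥ 2 be integers, and for t ∈ ℂ with t² ≠ 1 set [n] = (t^n − t^{−n})/(t − t^{−1}), d(λ|i,j) = λ_i − λ_j + j − i, and D(λ) = ∏_{1≤i<j≤N} [d(λ|i,j)]/[d(0|i,j)]. Then: (a) if t = exp(πi/(N+L)) or t = exp(−πi/(N+L)), or if t = −exp(±πi/(N+L)) and N is odd, then D(λ) is a positive real number for every λ ∈ V_{NL}; (b) if t = −exp(±πi/(N+L)) and N is even, then (−1)^{|λ|} D(λ) is a positive real number for every λ ∈ V_{NL}. -/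
noncomputable section
open scoped Classical BigOperators

namespace SOS

/-- `D(λ) = ∏_{1 ≤ i < j ≤ N} [d(λ|i,j)]/[d(0|i,j)]`. -/
def Dfun (N : ℕ) (t : ℂ) (x : SOSVtx) : ℂ :=
  ∏ i ∈ Finset.Icc 1 N, ∏ j ∈ Finset.Icc (i + 1) N,
    qint t (dZ x i j) / qint t (dZ zeroV i j)

/-- The size `|λ| = λ_1 + ⋯ + λ_N`. -/
def sz (N : ℕ) (x : SOSVtx) : ℤ := ∑ k ∈ Finset.Icc 1 N, x k

end SOS


section Helpers
open SOS Finset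

private lemma prod_pair' {M : Type*} [CommMonoid M] (f : ℕ → M) (n : ℕ) :
    ∏ i ∈ Icc 1 n, ∏ j ∈ Icc (i+1) n, (f i * f j)
      = (∏ i ∈ Icc 1 n, f i) ^ (n - 1) := by
  induction n with
  | zero => simp
  | succ n ih =>
    rcases Nat.eq_zero_or_pos n with h | h
    · subst h; simp
    rw [Finset.prod_Icc_succ_top (by omega : 1 ≤ n + 1)]
    have hinner : ∀ i ∈ Icc 1 n,
        ∏ j ∈ Icc (i+1) (n+1), (f i * f j)
          = (∏ j ∈ Icc (i+1) n, (f i * f j)) * (f i * f (n+1)) := by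
      intro i hi
      simp only [Finset.mem_Icc] at hi
      rw [Finset.prod_Icc_succ_top (by omega : i + 1 ≤ n + 1)]
    rw [Finset.prod_congr rfl hinner]
    rw [Finset.prod_mul_distrib, ih, Finset.prod_mul_distrib, Finset.prod_const,
      Nat.card_Icc]
    have he : Icc (n+1+1) (n+1) = (∅ : Finset ℕ) := by
      apply Finset.Icc_eq_empty; omega
    rw [he, Finset.prod_empty, Finset.prod_Icc_succ_top (by omega : 1 ≤ n + 1)]
    rw [mul_pow]
    have h1 : n + 1 - 1 = n := by omega
    rw [h1]
    have h3 : (∏ i ∈ Icc 1 n, f i) ^ (n - 1) * ∏ i ∈ Icc 1 n, f i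
        = (∏ i ∈ Icc 1 n, f i) ^ n := by
      rw [← pow_succ]; congr 1; omega
    rw [← mul_assoc, h3, mul_one]

private lemma zpow_sum_eq {e : ℝ} (he : e ≠ 0) (s : Finset ℕ) (g : ℕ → ℤ) :
    ∏ i ∈ s, e ^ g i = e ^ (∑ i ∈ s, g i) := by
  classical
  induction s using Finset.induction with
  | empty => simp
  | insert _ _ h ih =>
    rw [Finset.prod_insert h, Finset.sum_insert h, ih, ← zpow_add₀ he]

private lemma exp_zpow' (θ : ℝ) (m : ℤ) :
    Complex.exp (θ * Complex.I) ^ m = Complex.exp (((m : ℝ) * θ : ℝ) * Complex.I) := by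
  rw [← Complex.exp_int_mul]
  push_cast
  ring_nf

private lemma exp_sub_exp' (a : ℝ) :
    Complex.exp ((a : ℝ) * Complex.I) - Complex.exp ((-a : ℝ) * Complex.I)
      = 2 * Real.sin a * Complex.I := by
  rw [Complex.ofReal_neg, Complex.exp_mul_I, Complex.exp_mul_I]
  simp [Complex.cos_neg, Complex.sin_neg, ← Complex.ofReal_sin]
  ring

private lemma qint_exp' (θ : ℝ) (hθ : Real.sin θ ≠ 0) (n : ℤ) :
    qint (Complex.exp (θ * Complex.I)) n = ((Real.sin (n * θ) / Real.sin θ : ℝ) : ℂ) := by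
  unfold qint
  rw [exp_zpow', exp_zpow']
  have h1 : ((-n : ℤ) : ℝ) * θ = -((n : ℝ) * θ) := by push_cast; ring
  rw [h1]
  have h2 := exp_sub_exp' ((n : ℝ) * θ)
  have h3 : Complex.exp ((θ : ℝ) * Complex.I) - (Complex.exp ((θ : ℝ) * Complex.I))⁻¹
      = 2 * Real.sin θ * Complex.I := by
    rw [← Complex.exp_neg]
    simpa using exp_sub_exp' θ
  rw [h2, h3]
  have hs : (Real.sin θ : ℂ) ≠ 0 := Complex.ofReal_ne_zero.mpr hθ
  have hI : (Complex.I : ℂ) ≠ 0 := Complex.I_ne_zero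
  push_cast
  rw [mul_div_mul_right _ _ hI, mul_div_mul_left _ _ (two_ne_zero)]

private lemma qf1' (α : ℝ) (h : Real.sin α ≠ 0) (n : ℤ) :
    qint (Complex.exp ((α : ℝ) * Complex.I)) n
      = (((1:ℝ) ^ (n+1) * Real.sin (n * α) / Real.sin α : ℝ) : ℂ) := by
  rw [qint_exp' α h n]; norm_num

private lemma qf2' (α : ℝ) (h : Real.sin α ≠ 0) (n : ℤ) :
    qint (Complex.exp (((-α : ℝ)) * Complex.I)) n
      = (((1:ℝ) ^ (n+1) * Real.sin (n * α) / Real.sin α : ℝ) : ℂ) := by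
  have h' : Real.sin (-α) ≠ 0 := by simpa [Real.sin_neg] using neg_ne_zero.mpr h
  rw [qint_exp' (-α) h' n]
  congr 1
  rw [mul_neg, Real.sin_neg, Real.sin_neg, neg_div_neg_eq]
  norm_num

private lemma qf3' (α : ℝ) (h : Real.sin α ≠ 0) (n : ℤ) :
    qint (Complex.exp (((α + Real.pi : ℝ)) * Complex.I)) n
      = ((((-1:ℝ)) ^ (n+1) * Real.sin (n * α) / Real.sin α : ℝ) : ℂ) := by
  have h' : Real.sin (α + Real.pi) ≠ 0 := by
    rw [Real.sin_add_pi]; exact neg_ne_zero.mpr h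
  rw [qint_exp' (α + Real.pi) h' n]
  congr 1
  have hx : (n : ℝ) * (α + Real.pi) = (n : ℝ) * α + (n : ℤ) * Real.pi := by push_cast; ring
  rw [hx, Real.sin_add_int_mul_pi, Real.sin_add_pi]
  rw [div_neg, zpow_add_one₀ (by norm_num : (-1:ℝ) ≠ 0)]
  ring

private lemma qf4' (α : ℝ) (h : Real.sin α ≠ 0) (n : ℤ) :
    qint (Complex.exp (((-α + Real.pi : ℝ)) * Complex.I)) n
      = ((((-1:ℝ)) ^ (n+1) * Real.sin (n * α) / Real.sin α : ℝ) : ℂ) := by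
  have h' : Real.sin (-α + Real.pi) ≠ 0 := by
    rw [Real.sin_add_pi, Real.sin_neg, neg_neg]; exact h
  rw [qint_exp' (-α + Real.pi) h' n]
  congr 1
  have hx : (n : ℝ) * (-α + Real.pi) = -((n : ℝ) * α) + (n : ℤ) * Real.pi := by push_cast; ring
  rw [hx, Real.sin_add_int_mul_pi, Real.sin_neg, Real.sin_add_pi, Real.sin_neg, neg_neg]
  rw [zpow_add_one₀ (by norm_num : (-1:ℝ) ≠ 0)]
  ring

private lemma neg_exp' (a : ℝ) :
    -Complex.exp ((a : ℝ) * Complex.I) = Complex.exp (((a + Real.pi : ℝ)) * Complex.I) := by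
  rw [Complex.ofReal_add, add_mul, Complex.exp_add, Complex.exp_pi_mul_I]
  ring

private lemma inV_anti {N L : ℕ} {x : SOSVtx} (hx : InV N L x) :
    ∀ i j, 1 ≤ i → i ≤ j → j ≤ N → x j ≤ x i := by
  intro i j h1
  induction j with
  | zero => intro hij _; omega
  | succ j ih =>
    intro hij hjN
    rcases Nat.lt_or_ge j (i) with hc | hc
    · have : i = j + 1 := by omega
      subst this; exact le_refl _
    · have hstep : x (j+1) ≤ x j := hx.2.2.1 j (by omega) (by omega)
      exact le_trans hstep (ih (by omega) (by omega))

private lemma inV_bounds {N L : ℕ} {x : SOSVtx} (hN : 2 ≤ N) (hx : InV N L x) :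
    ∀ k, 1 ≤ k → k ≤ N → 0 ≤ x k ∧ x k ≤ (L : ℤ) := by
  intro k h1 h2
  constructor
  · have := inV_anti hx k N h1 h2 (le_refl N)
    rw [hx.2.1] at this; exact this
  · exact le_trans (inV_anti hx 1 k (le_refl 1) h1 h2) hx.2.2.2

/-- The master computation. -/
private lemma key_lemma (N L : ℕ) (hN : 2 ≤ N) (hL : 2 ≤ L) (t : ℂ) (e : ℝ)
    (he : e = 1 ∨ e = -1)
    (ht : ∀ n : ℤ, qint t n
        = ((e ^ (n+1) * Real.sin ((n : ℝ) * (Real.pi / ((N:ℝ) + L))) /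
            Real.sin (Real.pi / ((N:ℝ) + L)) : ℝ) : ℂ))
    (x : SOSVtx) (hx : InV N L x) :
    ∃ r : ℝ, 0 < r ∧
      Dfun N t x = ((e ^ ((((N - 1 : ℕ) : ℤ)) * sz N x) * r : ℝ) : ℂ) := by
  have he0 : e ≠ 0 := by rcases he with h | h <;> subst h <;> norm_num
  set α : ℝ := Real.pi / ((N:ℝ) + L) with hαdef
  have hNL0 : (0:ℝ) < (N:ℝ) + L := by positivity
  have hα0 : 0 < α := div_pos Real.pi_pos hNL0
  have hmul : ((N:ℝ) + L) * α = Real.pi := by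
    rw [hαdef]; field_simp
  have hsinpos : ∀ d : ℤ, 1 ≤ d → d ≤ (N:ℤ) + L - 1 → 0 < Real.sin ((d:ℝ) * α) := by
    intro d h1 h2
    apply Real.sin_pos_of_pos_of_lt_pi
    · have : (1:ℝ) ≤ (d:ℝ) := by exact_mod_cast h1
      nlinarith
    · have hd : (d:ℝ) ≤ (N:ℝ) + L - 1 := by
        have : ((d:ℝ)) ≤ (((N:ℤ) + L - 1 : ℤ) : ℝ) := by exact_mod_cast h2
        push_cast at this; linarith
      calc (d:ℝ) * α ≤ ((N:ℝ) + L - 1) * α := by nlinarith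
        _ < ((N:ℝ) + L) * α := by nlinarith
        _ = Real.pi := hmul
  have hsα : Real.sin α ≠ 0 := by
    have h1 : (1:ℤ) ≤ (N:ℤ) + L - 1 := by
      have : (2:ℤ) ≤ N := by exact_mod_cast hN
      have : (2:ℤ) ≤ L := by exact_mod_cast hL
      omega
    have := hsinpos 1 le_rfl h1
    simp only [Int.cast_one, one_mul] at this
    exact ne_of_gt this
  have hb : ∀ i ∈ Icc 1 N, ∀ j ∈ Icc (i+1) N,
      (1 ≤ dZ x i j ∧ dZ x i j ≤ (N:ℤ) + L - 1) ∧
      (1 ≤ dZ zeroV i j ∧ dZ zeroV i j ≤ (N:ℤ) + L - 1) := by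
    intro i hi j hj
    simp only [Finset.mem_Icc] at hi hj
    have hmono : x j ≤ x i := inV_anti hx i j hi.1 (by omega) hj.2
    have hbi := inV_bounds hN hx i hi.1 hi.2
    have hbj := inV_bounds hN hx j (by omega) hj.2
    have hL' : (2:ℤ) ≤ L := by exact_mod_cast hL
    simp only [dZ, zeroV]
    omega
  refine ⟨∏ i ∈ Icc 1 N, ∏ j ∈ Icc (i+1) N,
      Real.sin ((dZ x i j : ℝ) * α) / Real.sin ((dZ zeroV i j : ℝ) * α), ?_, ?_⟩
  · apply Finset.prod_pos
    intro i hi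
    apply Finset.prod_pos
    intro j hj
    obtain ⟨⟨hn1, hn2⟩, ⟨hm1, hm2⟩⟩ := hb i hi j hj
    exact div_pos (hsinpos _ hn1 hn2) (hsinpos _ hm1 hm2)
  · have hfac : ∀ i ∈ Icc 1 N, ∀ j ∈ Icc (i+1) N,
        qint t (dZ x i j) / qint t (dZ zeroV i j)
          = (((e ^ (x i) * e ^ (x j)) *
              (Real.sin ((dZ x i j : ℝ) * α) / Real.sin ((dZ zeroV i j : ℝ) * α)) : ℝ) : ℂ) := by
      intro i hi j hj
      obtain ⟨⟨hn1, hn2⟩, ⟨hm1, hm2⟩⟩ := hb i hi j hj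
      have hns : Real.sin ((dZ x i j : ℝ) * α) ≠ 0 := ne_of_gt (hsinpos _ hn1 hn2)
      have hms : Real.sin ((dZ zeroV i j : ℝ) * α) ≠ 0 := ne_of_gt (hsinpos _ hm1 hm2)
      rw [ht, ht, ← Complex.ofReal_div]
      congr 1
      have hee : e ^ (dZ x i j + 1) / e ^ (dZ zeroV i j + 1) = e ^ (x i) * e ^ (x j) := by
        rw [← zpow_sub₀ he0]
        have hdd : dZ x i j + 1 - (dZ zeroV i j + 1) = x i - x j := by
          simp only [dZ, zeroV]; ring
        rw [hdd, zpow_sub₀ he0, div_eq_mul_inv]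
        congr 1
        rcases he with h | h <;> subst h
        · simp
        · rw [← zpow_neg]
          have hsq : ((-1:ℝ)) ^ (x j) * ((-1:ℝ)) ^ (x j) = 1 := by
            rw [← zpow_add₀ (by norm_num : (-1:ℝ) ≠ 0)]
            exact Even.neg_one_zpow ⟨x j, by ring⟩
          have h1 : ((-1:ℝ)) ^ (-(x j)) * ((-1:ℝ)) ^ (x j) = 1 := by
            rw [← zpow_add₀ (by norm_num : (-1:ℝ) ≠ 0)]; simp
          exact mul_right_cancel₀ (zpow_ne_zero _ (by norm_num)) (h1.trans hsq.symm)
      have hv : e ^ (dZ zeroV i j + 1) ≠ 0 := zpow_ne_zero _ he0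
      have hu : e ^ (dZ x i j + 1) ≠ 0 := zpow_ne_zero _ he0
      rw [← hee]
      field_simp
    calc Dfun N t x
        = ∏ i ∈ Icc 1 N, ∏ j ∈ Icc (i+1) N,
            (((e ^ (x i) * e ^ (x j)) *
              (Real.sin ((dZ x i j : ℝ) * α) / Real.sin ((dZ zeroV i j : ℝ) * α)) : ℝ) : ℂ) := by
          unfold Dfun
          refine Finset.prod_congr rfl fun i hi => Finset.prod_congr rfl fun j hj => ?_
          exact hfac i hi j hj
      _ = ((∏ i ∈ Icc 1 N, ∏ j ∈ Icc (i+1) N,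
            ((e ^ (x i) * e ^ (x j)) *
              (Real.sin ((dZ x i j : ℝ) * α) / Real.sin ((dZ zeroV i j : ℝ) * α))) : ℝ) : ℂ) := by
          rw [Complex.ofReal_prod]
          refine Finset.prod_congr rfl fun i hi => ?_
          rw [Complex.ofReal_prod]
      _ = _ := by
          congr 1
          rw [show (∏ i ∈ Icc 1 N, ∏ j ∈ Icc (i+1) N,
              ((e ^ (x i) * e ^ (x j)) *
                (Real.sin ((dZ x i j : ℝ) * α) / Real.sin ((dZ zeroV i j : ℝ) * α))))
              = (∏ i ∈ Icc 1 N, ∏ j ∈ Icc (i+1) N, (e ^ (x i) * e ^ (x j))) *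
                (∏ i ∈ Icc 1 N, ∏ j ∈ Icc (i+1) N,
                  (Real.sin ((dZ x i j : ℝ) * α) / Real.sin ((dZ zeroV i j : ℝ) * α))) by
            rw [← Finset.prod_mul_distrib]
            refine Finset.prod_congr rfl fun i hi => ?_
            rw [← Finset.prod_mul_distrib]]
          congr 1
          rw [prod_pair' (fun k => e ^ (x k)) N]
          rw [zpow_sum_eq he0]
          rw [← zpow_natCast (e ^ (∑ i ∈ Icc 1 N, x i)) (N - 1), ← zpow_mul]
          rw [show (∑ i ∈ Icc 1 N, x i) = sz N x from rfl]
          rw [mul_comm (sz N x) (((N - 1 : ℕ) : ℤ))]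
end Helpers

open SOS Complex in
/-- Positivity of the quantum dimensions `D(λ)`:
(a) if `t = exp(±πi/(N+L))`, or `t = −exp(±πi/(N+L))` with `N` odd, then `D(λ)` is a
positive real number for every `λ ∈ V_{N,L}`;
(b) if `t = −exp(±πi/(N+L))` and `N` is even, then `(−1)^{|λ|} D(λ)` is a positive real
number for every `λ ∈ V_{N,L}`. -/
theorem SOS_D_positivity (N L : ℕ) (hN : 2 ≤ N) (hL : 2 ≤ L) :
    (∀ t : ℂ,
      (t = Complex.exp (Real.pi * Complex.I / (N + L)) ∨
       t = Complex.exp (-(Real.pi * Complex.I) / (N + L)) ∨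
       ((t = -Complex.exp (Real.pi * Complex.I / (N + L)) ∨
         t = -Complex.exp (-(Real.pi * Complex.I) / (N + L))) ∧ Odd N)) →
      ∀ x : SOSVtx, InV N L x → ∃ r : ℝ, 0 < r ∧ Dfun N t x = (r : ℂ)) ∧
    (∀ t : ℂ,
      (t = -Complex.exp (Real.pi * Complex.I / (N + L)) ∨
       t = -Complex.exp (-(Real.pi * Complex.I) / (N + L))) → Even N →
      ∀ x : SOSVtx, InV N L x →
        ∃ r : ℝ, 0 < r ∧ (-1 : ℂ) ^ (sz N x) * Dfun N t x = (r : ℂ)) := by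
  classical
  have hNL0 : ((N:ℝ) + L) ≠ 0 := by positivity
  set α : ℝ := Real.pi / ((N:ℝ) + L) with hαdef
  have hα0 : 0 < α := div_pos Real.pi_pos (by positivity)
  have hαlt : α < Real.pi := by
    rw [hαdef, div_lt_iff₀ (by positivity : (0:ℝ) < (N:ℝ) + L)]
    have h4 : (4:ℝ) ≤ (N:ℝ) + L := by
      have : (2:ℝ) ≤ N := by exact_mod_cast hN
      have : (2:ℝ) ≤ L := by exact_mod_cast hL
      linarith
    nlinarith [Real.pi_pos]
  have hsα : Real.sin α ≠ 0 := ne_of_gt (Real.sin_pos_of_pos_of_lt_pi hα0 hαlt)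
  -- the four values of t in exponential form
  have hform1 : Complex.exp (Real.pi * Complex.I / ((N:ℂ) + L))
      = Complex.exp ((α : ℝ) * Complex.I) := by
    congr 1
    rw [hαdef]
    push_cast
    ring
  have hform2 : Complex.exp (-(Real.pi * Complex.I) / ((N:ℂ) + L))
      = Complex.exp (((-α : ℝ)) * Complex.I) := by
    congr 1
    rw [hαdef]
    push_cast
    ring
  have key1 : ∀ t : ℂ,
      (t = Complex.exp (Real.pi * Complex.I / (N + L)) ∨
       t = Complex.exp (-(Real.pi * Complex.I) / (N + L))) →
      ∀ n : ℤ, qint t n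
        = (((1:ℝ) ^ (n+1) * Real.sin ((n : ℝ) * α) / Real.sin α : ℝ) : ℂ) := by
    intro t ht n
    rcases ht with h | h <;> subst h
    · rw [hform1]; exact qf1' α hsα n
    · rw [hform2]; exact qf2' α hsα n
  have key2 : ∀ t : ℂ,
      (t = -Complex.exp (Real.pi * Complex.I / (N + L)) ∨
       t = -Complex.exp (-(Real.pi * Complex.I) / (N + L))) →
      ∀ n : ℤ, qint t n
        = ((((-1:ℝ)) ^ (n+1) * Real.sin ((n : ℝ) * α) / Real.sin α : ℝ) : ℂ) := by
    intro t ht n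
    rcases ht with h | h <;> subst h
    · rw [hform1, neg_exp' α]; exact qf3' α hsα n
    · rw [hform2, neg_exp' (-α)]; exact qf4' α hsα n
  constructor
  · intro t ht x hx
    rcases ht with h | h | ⟨h, hodd⟩
    · obtain ⟨r, hr, hD⟩ := key_lemma N L hN hL t 1 (Or.inl rfl) (key1 t (Or.inl h)) x hx
      exact ⟨r, hr, by rw [hD]; norm_num⟩
    · obtain ⟨r, hr, hD⟩ := key_lemma N L hN hL t 1 (Or.inl rfl) (key1 t (Or.inr h)) x hx
      exact ⟨r, hr, by rw [hD]; norm_num⟩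
    · obtain ⟨r, hr, hD⟩ := key_lemma N L hN hL t (-1) (Or.inr rfl) (key2 t h) x hx
      refine ⟨r, hr, ?_⟩
      rw [hD]
      have heven : Even ((((N - 1 : ℕ) : ℤ)) * sz N x) := by
        apply Even.mul_right
        obtain ⟨m, hm⟩ := hodd
        have : ((N - 1 : ℕ) : ℤ) = 2 * m := by
          have hm' : N = 2 * m + 1 := hm
          subst hm'
          push_cast [Nat.add_sub_cancel]
          ring
        exact ⟨m, by omega⟩
      rw [Even.neg_one_zpow heven, one_mul]
  · intro t ht heN x hx
    obtain ⟨r, hr, hD⟩ := key_lemma N L hN hL t (-1) (Or.inr rfl) (key2 t ht) x hx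
    refine ⟨r, hr, ?_⟩
    rw [hD]
    have hcast : ((-1 : ℂ)) ^ (sz N x) = ((((-1:ℝ)) ^ (sz N x) : ℝ) : ℂ) := by
      rw [Complex.ofReal_zpow]
      norm_num
    rw [hcast, ← Complex.ofReal_mul]
    congr 1
    rw [← mul_assoc, ← zpow_add₀ (by norm_num : (-1:ℝ) ≠ 0)]
    have heven : Even (sz N x + (((N - 1 : ℕ) : ℤ)) * sz N x) := by
      obtain ⟨m, hm⟩ := heN
      have h1 : ((N - 1 : ℕ) : ℤ) = (N : ℤ) - 1 := by
        have : 1 ≤ N := by omega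
        push_cast [Nat.cast_sub this]
        ring
      rw [h1]
      have h2 : sz N x + ((N : ℤ) - 1) * sz N x = (N : ℤ) * sz N x := by ring
      rw [h2]
      have h3 : (N : ℤ) = 2 * m := by
        have : N = m + m := hm
        omega
      exact ⟨m * sz N x, by rw [h3]; ring⟩
    rw [Even.neg_one_zpow heven, one_mul]
end
end
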